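/- arXiv:2402.16169 — 8 statements merged into one kernel-verified Lean document; each statement's English description precedes it below -/
import Mathlib

section
/- Let G be a graph whose vertex set admits a partition V = V₁ ∪ ⋯ ∪ V_k into k ≥ 1 independent sets, each setwise fixed by every automorphism of G. Then there exists an orientation G⃗ of G with Aut(G⃗) = Aut(G), and consequently the maximum of D' over all orientations of G equals D'(G). -/
/-- An orientation of a simple graph `G`: a choice of exactly one direction for each edge. -/
structure GraphOrientation {V : Type*} (G : SimpleGraph V) where
  A : V → V → Prop
  consistent : ∀ u v, G.Adj u v ↔ A u v ∨ A v u
  asymm : ∀ u v, A u v → ¬ A v u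

/-- `φ` is an automorphism of the graph `G`. -/
def IsGraphAut {V : Type*} (G : SimpleGraph V) (φ : Equiv.Perm V) : Prop :=
  ∀ u v, G.Adj (φ u) (φ v) ↔ G.Adj u v

/-- `φ` is an automorphism of the digraph with arc relation `A`. -/
def IsDigraphAut {V : Type*} (A : V → V → Prop) (φ : Equiv.Perm V) : Prop :=
  ∀ u v, A (φ u) (φ v) ↔ A u v

/-- An edge colouring `c` of `G` is distinguishing if the only automorphism
preserving it is the identity. -/
def IsDistEdgeCol {V : Type*} (G : SimpleGraph V) {C : Type*} (c : Sym2 V → C) : Prop :=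
  ∀ φ : Equiv.Perm V, IsGraphAut G φ →
    (∀ e ∈ G.edgeSet, c (Sym2.map φ e) = c e) → φ = 1

/-- The distinguishing index `D'(G)` of a graph. -/
noncomputable def D' {V : Type*} (G : SimpleGraph V) : ℕ :=
  sInf {k | ∃ c : Sym2 V → Fin k, IsDistEdgeCol G c}

/-- An arc colouring `c` of the digraph with arc relation `A` is distinguishing if
the only automorphism preserving it is the identity. -/
def IsDistArcCol {V : Type*} (A : V → V → Prop) {C : Type*} (c : V → V → C) : Prop :=
  ∀ φ : Equiv.Perm V, IsDigraphAut A φ →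
    (∀ u v, A u v → c (φ u) (φ v) = c u v) → φ = 1

/-- The distinguishing index of a digraph with arc relation `A`. -/
noncomputable def Dd' {V : Type*} (A : V → V → Prop) : ℕ :=
  sInf {k | ∃ c : V → V → Fin k, IsDistArcCol A c}

/-- `OD'⁻(G)`: minimum of the distinguishing index over all orientations of `G`. -/
noncomputable def ODminus {V : Type*} (G : SimpleGraph V) : ℕ :=
  sInf {n | ∃ O : GraphOrientation G, Dd' O.A = n}

/-- `OD'⁺(G)`: maximum of the distinguishing index over all orientations of `G`. -/
noncomputable def ODplus {V : Type*} (G : SimpleGraph V) : ℕ :=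
  sSup {n | ∃ O : GraphOrientation G, Dd' O.A = n}

/-- `G` is claw-free: no induced `K_{1,3}`. -/
def ClawFree {V : Type*} (G : SimpleGraph V) : Prop :=
  ∀ x a b c : V, G.Adj x a → G.Adj x b → G.Adj x c →
    a ≠ b → a ≠ c → b ≠ c → (G.Adj a b ∨ G.Adj a c ∨ G.Adj b c)

/-- `G` is traceable: it has a Hamiltonian path. -/
def Traceable {V : Type*} [DecidableEq V] (G : SimpleGraph V) : Prop :=
  ∃ (u v : V) (p : G.Walk u v), p.IsHamiltonian

/-- `H` is empty or has a Hamiltonian path (i.e. admits a path cover by one path). -/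
def TraceableOrEmpty {W : Type*} [DecidableEq W] (H : SimpleGraph W) : Prop :=
  IsEmpty W ∨ ∃ (u v : W) (p : H.Walk u v), p.IsHamiltonian

/-- `φ` is a twisted automorphism: some power of `φ` swaps the ends of an edge. -/
def Twisted {V : Type*} (G : SimpleGraph V) (φ : Equiv.Perm V) : Prop :=
  ∃ (n : ℕ) (u v : V), 1 ≤ n ∧ G.Adj u v ∧ (φ ^ n) u = v ∧ (φ ^ n) v = u

/-- `H` has no cut-vertex. -/
def NoCutVtx {W : Type*} (H : SimpleGraph W) : Prop :=
  ∀ v : W, (H.induce {u | u ≠ v}).Preconnected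


section Helpers

variable {V : Type*}

lemma aux_digraph_to_graph {G : SimpleGraph V} (O : GraphOrientation G)
    (φ : Equiv.Perm V) (h : IsDigraphAut O.A φ) : IsGraphAut G φ := by
  intro u v
  rw [O.consistent (φ u) (φ v), O.consistent u v, h u v, h v u]

lemma aux_edge_to_arc {G : SimpleGraph V} (O : GraphOrientation G) {k : ℕ}
    (c : Sym2 V → Fin k) (hc : IsDistEdgeCol G c) :
    IsDistArcCol O.A (fun u v => c s(u, v)) := by
  intro φ hφ hpres
  apply hc φ (aux_digraph_to_graph O φ hφ)
  intro e he
  induction e using Sym2.ind with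
  | _ u v =>
    rw [SimpleGraph.mem_edgeSet] at he
    rcases (O.consistent u v).mp he with h | h
    · simpa [Sym2.map_pair_eq] using hpres u v h
    · have h2 := hpres v u h
      simp only [Sym2.map_pair_eq]
      rw [show s(φ u, φ v) = s(φ v, φ u) from Sym2.eq_swap,
        show s(u, v) = s(v, u) from Sym2.eq_swap]
      exact h2

lemma aux_arc_to_edge_general [Nonempty V] {G : SimpleGraph V} {k' : ℕ}
    (p : V → Fin k')
    (hind : ∀ u v, G.Adj u v → p u ≠ p v)
    (hfix : ∀ φ : Equiv.Perm V, IsGraphAut G φ → ∀ v, p (φ v) = p v)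
    (O : GraphOrientation G) {k : ℕ} (c' : V → V → Fin k)
    (hc' : IsDistArcCol O.A c') :
    ∃ c : Sym2 V → Fin k × Fin k × Bool, IsDistEdgeCol G c := by
  classical
  obtain ⟨v₀⟩ := ‹Nonempty V›
  set g : V → V → Fin k × Fin k × Bool :=
    fun u v => if p u < p v then (c' u v, c' v u, decide (O.A u v))
      else if p v < p u then (c' v u, c' u v, decide (O.A v u))
      else (c' v₀ v₀, c' v₀ v₀, true) with hg
  have hsym : ∀ u v, g u v = g v u := by
    intro u v
    rcases lt_trichotomy (p u) (p v) with h | h | h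
    · simp [hg, h, h.asymm]
    · simp [hg, h]
    · simp [hg, h, h.asymm]
  refine ⟨Sym2.lift ⟨g, hsym⟩, ?_⟩
  intro φ hφ hpres
  have hp : ∀ v, p (φ v) = p v := hfix φ hφ
  have key : ∀ u v, G.Adj u v → g (φ u) (φ v) = g u v := by
    intro u v huv
    have h1 := hpres s(u, v) (by simpa using huv)
    simpa [Sym2.map_pair_eq] using h1
  have hdig : IsDigraphAut O.A φ := by
    intro u v
    by_cases huv : G.Adj u v
    · rcases (hind u v huv).lt_or_gt with h | h
      · have hk := key u v huv
        have hφlt : p (φ u) < p (φ v) := by rw [hp, hp]; exact h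
        simp only [hg, if_pos h, if_pos hφlt] at hk
        have h3 := congrArg (fun x => x.2.2) hk
        simpa [decide_eq_decide] using h3
      · have hk := key v u huv.symm
        have hφlt : p (φ v) < p (φ u) := by rw [hp, hp]; exact h
        have h23 : O.A (φ v) (φ u) ↔ O.A v u := by
          simp only [hg, if_pos h, if_pos hφlt] at hk
          have h3 := congrArg (fun x => x.2.2) hk
          simpa [decide_eq_decide] using h3
        constructor
        · intro hA
          have hnvu : ¬ O.A v u := fun hvu => O.asymm _ _ hA (h23.mpr hvu)
          exact ((O.consistent u v).mp huv).resolve_right hnvu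
        · intro hA
          have hnvu : ¬ O.A (φ v) (φ u) := fun hvu => O.asymm _ _ hA (h23.mp hvu)
          exact ((O.consistent (φ u) (φ v)).mp ((hφ u v).mpr huv)).resolve_right hnvu
    · constructor
      · intro hA
        exact absurd ((hφ u v).mp ((O.consistent (φ u) (φ v)).mpr (Or.inl hA))) huv
      · intro hA
        exact absurd ((O.consistent u v).mpr (Or.inl hA)) huv
  have hpresA : ∀ u v, O.A u v → c' (φ u) (φ v) = c' u v := by
    intro u v hA
    have huv : G.Adj u v := (O.consistent u v).mpr (Or.inl hA)
    rcases (hind u v huv).lt_or_gt with h | h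
    · have hk := key u v huv
      have hφlt : p (φ u) < p (φ v) := by rw [hp, hp]; exact h
      simp only [hg, if_pos h, if_pos hφlt] at hk
      exact congrArg (fun x => x.1) hk
    · have hk := key v u huv.symm
      have hφlt : p (φ v) < p (φ u) := by rw [hp, hp]; exact h
      simp only [hg, if_pos h, if_pos hφlt] at hk
      exact congrArg (fun x => x.2.1) hk
  exact hc' φ hdig hpresA

lemma aux_arc_to_edge_special [Nonempty V] {G : SimpleGraph V} {k' : ℕ}
    (p : V → Fin k')
    (hind : ∀ u v, G.Adj u v → p u ≠ p v)
    (hfix : ∀ φ : Equiv.Perm V, IsGraphAut G φ → ∀ v, p (φ v) = p v)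
    {k : ℕ} (c' : V → V → Fin k)
    (hc' : IsDistArcCol (fun u v => G.Adj u v ∧ p u < p v) c') :
    ∃ c : Sym2 V → Fin k, IsDistEdgeCol G c := by
  classical
  obtain ⟨v₀⟩ := ‹Nonempty V›
  set g : V → V → Fin k :=
    fun u v => if p u < p v then c' u v else if p v < p u then c' v u else c' v₀ v₀ with hg
  have hsym : ∀ u v, g u v = g v u := by
    intro u v
    rcases lt_trichotomy (p u) (p v) with h | h | h
    · simp [hg, h, h.asymm]
    · simp [hg, h]
    · simp [hg, h, h.asymm]
  refine ⟨Sym2.lift ⟨g, hsym⟩, ?_⟩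
  intro φ hφ hpres
  have hp : ∀ v, p (φ v) = p v := hfix φ hφ
  have key : ∀ u v, G.Adj u v → g (φ u) (φ v) = g u v := by
    intro u v huv
    have h1 := hpres s(u, v) (by simpa using huv)
    simpa [Sym2.map_pair_eq] using h1
  apply hc' φ
  · intro u v
    show G.Adj (φ u) (φ v) ∧ p (φ u) < p (φ v) ↔ G.Adj u v ∧ p u < p v
    rw [hφ u v, hp u, hp v]
  · rintro u v ⟨huv, hlt⟩
    have hk := key u v huv
    have hφlt : p (φ u) < p (φ v) := by rw [hp, hp]; exact hlt
    simp only [hg, if_pos hlt, if_pos hφlt] at hk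
    exact hk

end Helpers

theorem stmt3 {V : Type*} [Fintype V] (G : SimpleGraph V) {k : ℕ} (hk : 1 ≤ k)
    (p : V → Fin k)
    (hind : ∀ u v, G.Adj u v → p u ≠ p v)
    (hfix : ∀ φ : Equiv.Perm V, IsGraphAut G φ → ∀ v, p (φ v) = p v) :
    (∃ O : GraphOrientation G, ∀ φ : Equiv.Perm V, IsDigraphAut O.A φ ↔ IsGraphAut G φ) ∧
      ODplus G = D' G := by
  classical
  let O₀ : GraphOrientation G :=
    { A := fun u v => G.Adj u v ∧ p u < p v
      consistent := by
        intro u v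
        constructor
        · intro h
          rcases (hind u v h).lt_or_gt with h' | h'
          · exact Or.inl ⟨h, h'⟩
          · exact Or.inr ⟨h.symm, h'⟩
        · rintro (⟨h, _⟩ | ⟨h, _⟩)
          · exact h
          · exact h.symm
      asymm := by
        rintro u v ⟨_, h⟩ ⟨_, h'⟩
        exact absurd h' h.asymm }
  have hequiv : ∀ φ : Equiv.Perm V, IsDigraphAut O₀.A φ ↔ IsGraphAut G φ := by
    intro φ
    constructor
    · exact aux_digraph_to_graph O₀ φ
    · intro hφ u v
      have hp := hfix φ hφ
      show G.Adj (φ u) (φ v) ∧ p (φ u) < p (φ v) ↔ G.Adj u v ∧ p u < p v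
      rw [hφ u v, hp u, hp v]
  have hTS : ∀ (O : GraphOrientation G) (m : ℕ),
      (∃ c : Sym2 V → Fin m, IsDistEdgeCol G c) →
      (∃ c : V → V → Fin m, IsDistArcCol O.A c) := by
    rintro O m ⟨c, hc⟩
    exact ⟨fun u v => c s(u, v), aux_edge_to_arc O c hc⟩
  have hempty : IsEmpty V → ∀ m : ℕ, ∃ c : Sym2 V → Fin m, IsDistEdgeCol G c := by
    intro hV m
    haveI : IsEmpty (Sym2 V) := ⟨fun e => Sym2.ind (fun a _ => isEmptyElim a) e⟩
    exact ⟨isEmptyElim, fun φ _ _ => Equiv.ext fun x => isEmptyElim x⟩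
  have hST : ∀ O : GraphOrientation G,
      (∃ m, ∃ c : V → V → Fin m, IsDistArcCol O.A c) →
      (∃ m, ∃ c : Sym2 V → Fin m, IsDistEdgeCol G c) := by
    rintro O ⟨m, c', hc'⟩
    by_cases hV : Nonempty V
    · obtain ⟨c, hc⟩ := aux_arc_to_edge_general p hind hfix O c' hc'
      refine ⟨Fintype.card (Fin m × Fin m × Bool),
        fun e => Fintype.equivFin _ (c e), ?_⟩
      intro φ hφ hpres
      exact hc φ hφ fun e he => (Fintype.equivFin _).injective (hpres e he)
    · exact ⟨0, hempty (not_nonempty_iff.mp hV) 0⟩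
  have hS₀T : ∀ m : ℕ, (∃ c : V → V → Fin m, IsDistArcCol O₀.A c) →
      (∃ c : Sym2 V → Fin m, IsDistEdgeCol G c) := by
    rintro m ⟨c', hc'⟩
    by_cases hV : Nonempty V
    · exact aux_arc_to_edge_special p hind hfix c' hc'
    · exact hempty (not_nonempty_iff.mp hV) m
  have hbound : ∀ O : GraphOrientation G, Dd' O.A ≤ D' G := by
    intro O
    unfold Dd' D'
    by_cases hT : {m | ∃ c : Sym2 V → Fin m, IsDistEdgeCol G c}.Nonempty
    · exact Nat.sInf_le (hTS O _ (Nat.sInf_mem hT))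
    · have hS : {m | ∃ c : V → V → Fin m, IsDistArcCol O.A c} = ∅ := by
        rw [Set.eq_empty_iff_forall_notMem]
        intro m hm
        exact hT (hST O ⟨m, hm⟩)
      rw [hS, Nat.sInf_empty]
      exact Nat.zero_le _
  have heq : Dd' O₀.A = D' G := by
    refine le_antisymm (hbound O₀) ?_
    unfold Dd' D'
    by_cases hS : {m | ∃ c : V → V → Fin m, IsDistArcCol O₀.A c}.Nonempty
    · exact Nat.sInf_le (hS₀T _ (Nat.sInf_mem hS))
    · have hT : {m | ∃ c : Sym2 V → Fin m, IsDistEdgeCol G c} = ∅ := by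
        rw [Set.eq_empty_iff_forall_notMem]
        intro m hm
        exact hS ⟨m, hTS O₀ m hm⟩
      rw [hT, Nat.sInf_empty]
      exact Nat.zero_le _
  refine ⟨⟨O₀, hequiv⟩, ?_⟩
  have hmem : D' G ∈ {n | ∃ O : GraphOrientation G, Dd' O.A = n} := ⟨O₀, heq⟩
  have hub : ∀ n ∈ {n | ∃ O : GraphOrientation G, Dd' O.A = n}, n ≤ D' G := by
    rintro n ⟨O, rfl⟩
    exact hbound O
  exact le_antisymm (csSup_le ⟨_, hmem⟩ hub) (le_csSup ⟨D' G, hub⟩ hmem)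
end

section
/- Let G be a graph whose vertex set admits a partition V = V₁ ∪ ⋯ ∪ V_k into k ≥ 1 independent sets, each setwise fixed by every automorphism of G. Then the minimum of the distinguishing index over all orientations of G equals ⌈D'(G)/2⌉. -/
lemma digraphAut_isGraphAut {V : Type*} {G : SimpleGraph V} (O : GraphOrientation G)
    {φ : Equiv.Perm V} (h : IsDigraphAut O.A φ) : IsGraphAut G φ := fun u v =>
  ((O.consistent _ _).trans (or_congr (h u v) (h v u))).trans (O.consistent u v).symm

lemma fin_two_cases (x : Fin 2) : x = 0 ∨ x = 1 := by omega

/-- From an arc colouring with `m` colours on any orientation, build a distinguishing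
edge colouring with `2m` colours. -/
lemma lemA {V : Type*} {G : SimpleGraph V} {k : ℕ}
    (p : V → Fin k)
    (hind : ∀ u v, G.Adj u v → p u ≠ p v)
    (hfix : ∀ φ : Equiv.Perm V, IsGraphAut G φ → ∀ v, p (φ v) = p v)
    (O : GraphOrientation G) {m : ℕ} (c' : V → V → Fin m) (hc' : IsDistArcCol O.A c') :
    ∃ c : Sym2 V → Fin (2 * m), IsDistEdgeCol G c := by
  classical
  set f : V → V → Fin 2 × Fin m := fun u v =>
    if O.A u v then ((if p u < p v then 0 else 1), c' u v)
    else if O.A v u then ((if p v < p u then 0 else 1), c' v u)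
    else (0, min (c' u v) (c' v u)) with hf
  have hsymm : ∀ u v, f u v = f v u := by
    intro u v
    by_cases h1 : O.A u v
    · have h2 : ¬ O.A v u := O.asymm u v h1
      simp [hf, h1, h2]
    · by_cases h2 : O.A v u
      · simp [hf, h1, h2]
      · simp [hf, h1, h2, min_comm]
  refine ⟨fun e => finProdFinEquiv (Sym2.lift ⟨f, hsymm⟩ e), ?_⟩
  intro φ hφ hpres
  -- φ preserves f on edges
  have hpf : ∀ u v, G.Adj u v → f (φ u) (φ v) = f u v := by
    intro u v huv
    have := hpres s(u, v) (by simpa using huv)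
    rw [Sym2.map_pair_eq] at this
    simpa using finProdFinEquiv.injective (by simpa using this)
  have hp : ∀ v, p (φ v) = p v := hfix φ hφ
  -- step 1: φ maps arcs to arcs
  have step1 : ∀ u v, O.A u v → O.A (φ u) (φ v) := by
    intro u v hA
    have huv : G.Adj u v := (O.consistent u v).mpr (Or.inl hA)
    have huv' : G.Adj (φ u) (φ v) := (hφ u v).mpr huv
    rcases (O.consistent _ _).mp huv' with h | h
    · exact h
    · exfalso
      have hnA : ¬ O.A (φ u) (φ v) := fun h' => O.asymm _ _ h' h
      have hfe := hpf u v huv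
      have hne := hind u v huv
      simp only [hf, if_pos hA, if_neg hnA, if_pos h] at hfe
      have hb : (if p (φ v) < p (φ u) then (0 : Fin 2) else 1)
          = (if p u < p v then 0 else 1) := congrArg Prod.fst hfe
      rw [hp u, hp v] at hb
      rcases lt_or_gt_of_ne hne with hlt | hlt
      · rw [if_neg (asymm hlt), if_pos hlt] at hb; exact one_ne_zero hb
      · rw [if_pos hlt, if_neg (asymm hlt)] at hb; exact zero_ne_one hb
  -- step 2: φ is a digraph automorphism
  have step2 : IsDigraphAut O.A φ := by
    intro u v
    constructor
    · intro h
      have huv : G.Adj u v := (hφ u v).mp ((O.consistent _ _).mpr (Or.inl h))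
      rcases (O.consistent u v).mp huv with h' | h'
      · exact h'
      · exact absurd (step1 v u h') (fun h'' => O.asymm _ _ h'' h)
    · exact step1 u v
  -- step 3: φ preserves the arc colouring
  refine hc' φ step2 ?_
  intro u v hA
  have huv : G.Adj u v := (O.consistent u v).mpr (Or.inl hA)
  have hA' : O.A (φ u) (φ v) := step1 u v hA
  have hfe := hpf u v huv
  simp only [hf, if_pos hA, if_pos hA'] at hfe
  exact congrArg Prod.snd hfe

/-- From a distinguishing edge colouring with `n` colours, build an orientation
with a distinguishing arc colouring with `⌈n/2⌉` colours. -/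
lemma lemB {V : Type*} {G : SimpleGraph V} {k : ℕ}
    (p : V → Fin k)
    (hind : ∀ u v, G.Adj u v → p u ≠ p v)
    (hfix : ∀ φ : Equiv.Perm V, IsGraphAut G φ → ∀ v, p (φ v) = p v)
    {n : ℕ} (c : Sym2 V → Fin n) (hc : IsDistEdgeCol G c) :
    ∃ O : GraphOrientation G, ∃ c' : V → V → Fin ((n + 1) / 2),
      IsDistArcCol O.A c' := by
  classical
  set m := (n + 1) / 2 with hm
  have hle : n ≤ 2 * m := by omega
  set d : Sym2 V → Fin 2 × Fin m :=
    fun e => finProdFinEquiv.symm (Fin.castLE hle (c e)) with hd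
  have hdinj : ∀ e e', d e = d e' → c e = c e' := by
    intro e e' h
    have := finProdFinEquiv.symm.injective h
    exact Fin.castLE_injective hle this
  set A : V → V → Prop := fun u v =>
    G.Adj u v ∧ ((p u < p v ∧ (d s(u, v)).1 = 0) ∨ (p v < p u ∧ (d s(u, v)).1 = 1))
    with hA
  have swap : ∀ u v : V, s(v, u) = s(u, v) := fun u v => Sym2.eq_swap
  refine ⟨⟨A, ?_, ?_⟩, fun u v => (d s(u, v)).2, ?_⟩
  · intro u v
    constructor
    · intro huv
      rcases lt_or_gt_of_ne (hind u v huv) with hlt | hlt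
      · rcases fin_two_cases (d s(u, v)).1 with hb | hb
        · exact Or.inl ⟨huv, Or.inl ⟨hlt, hb⟩⟩
        · exact Or.inr ⟨huv.symm, Or.inr ⟨hlt, by rwa [swap]⟩⟩
      · rcases fin_two_cases (d s(u, v)).1 with hb | hb
        · exact Or.inr ⟨huv.symm, Or.inl ⟨hlt, by rwa [swap]⟩⟩
        · exact Or.inl ⟨huv, Or.inr ⟨hlt, hb⟩⟩
    · rintro (⟨h, -⟩ | ⟨h, -⟩)
      · exact h
      · exact h.symm
  · rintro u v ⟨-, h1⟩ ⟨-, h2⟩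
    rw [swap] at h2
    rcases h1 with ⟨ho, hb⟩ | ⟨ho, hb⟩ <;> rcases h2 with ⟨ho', hb'⟩ | ⟨ho', hb'⟩
    · exact absurd ho' (asymm ho)
    · exact absurd (hb ▸ hb') (by simp)
    · exact absurd (hb ▸ hb') (by simp)
    · exact absurd ho' (asymm ho)
  · intro φ hφ hpres
    have hga : IsGraphAut G φ :=
      digraphAut_isGraphAut ⟨A, by
        intro u v
        constructor
        · intro huv
          rcases lt_or_gt_of_ne (hind u v huv) with hlt | hlt
          · rcases fin_two_cases (d s(u, v)).1 with hb | hb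
            · exact Or.inl ⟨huv, Or.inl ⟨hlt, hb⟩⟩
            · exact Or.inr ⟨huv.symm, Or.inr ⟨hlt, by rwa [swap]⟩⟩
          · rcases fin_two_cases (d s(u, v)).1 with hb | hb
            · exact Or.inr ⟨huv.symm, Or.inl ⟨hlt, by rwa [swap]⟩⟩
            · exact Or.inl ⟨huv, Or.inr ⟨hlt, hb⟩⟩
        · rintro (⟨h, -⟩ | ⟨h, -⟩)
          · exact h
          · exact h.symm, by
        rintro u v ⟨-, h1⟩ ⟨-, h2⟩
        rw [swap] at h2
        rcases h1 with ⟨ho, hb⟩ | ⟨ho, hb⟩ <;> rcases h2 with ⟨ho', hb'⟩ | ⟨ho', hb'⟩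
        · exact absurd ho' (asymm ho)
        · exact absurd (hb ▸ hb') (by simp)
        · exact absurd (hb ▸ hb') (by simp)
        · exact absurd ho' (asymm ho)⟩ hφ
    have hp : ∀ v, p (φ v) = p v := hfix φ hga
    -- claim: d is preserved on arcs
    have claim : ∀ u v, A u v → d (Sym2.map φ s(u, v)) = d s(u, v) := by
      intro u v hAuv
      have hA' : A (φ u) (φ v) := (hφ u v).mpr hAuv
      have hsnd : (d s(φ u, φ v)).2 = (d s(u, v)).2 := hpres u v hAuv
      rw [Sym2.map_pair_eq]
      refine Prod.ext ?_ hsnd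
      rcases hAuv.2 with ⟨ho, hb⟩ | ⟨ho, hb⟩ <;>
        rcases hA'.2 with ⟨ho', hb'⟩ | ⟨ho', hb'⟩ <;>
          rw [hp u, hp v] at ho'
      · rw [hb, hb']
      · exact absurd ho' (asymm ho)
      · exact absurd ho' (asymm ho)
      · rw [hb, hb']
    refine hc φ hga ?_
    intro e he
    induction e using Sym2.ind with
    | _ u v =>
      rw [SimpleGraph.mem_edgeSet] at he
      rcases lt_or_gt_of_ne (hind u v he) with hlt | hlt <;>
        rcases fin_two_cases (d s(u, v)).1 with hb | hb
      · exact hdinj _ _ (claim u v ⟨he, Or.inl ⟨hlt, hb⟩⟩)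
      · rw [← swap u v]
        exact hdinj _ _ (claim v u ⟨he.symm, Or.inr ⟨hlt, by rwa [swap]⟩⟩)
      · rw [← swap u v]
        exact hdinj _ _ (claim v u ⟨he.symm, Or.inl ⟨hlt, by rwa [swap]⟩⟩)
      · exact hdinj _ _ (claim u v ⟨he, Or.inr ⟨hlt, hb⟩⟩)

/-- Any distinguishing edge colouring yields a distinguishing arc colouring of any
orientation with the same number of colours. -/
lemma lemC {V : Type*} {G : SimpleGraph V} (O : GraphOrientation G)
    {n : ℕ} (c : Sym2 V → Fin n) (hc : IsDistEdgeCol G c) :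
    ∃ c' : V → V → Fin n, IsDistArcCol O.A c' := by
  refine ⟨fun u v => c s(u, v), ?_⟩
  intro φ hφ hpres
  have hga : IsGraphAut G φ := digraphAut_isGraphAut O hφ
  refine hc φ hga ?_
  intro e he
  induction e using Sym2.ind with
  | _ u v =>
    rw [SimpleGraph.mem_edgeSet] at he
    rw [Sym2.map_pair_eq]
    rcases (O.consistent u v).mp he with h | h
    · exact hpres u v h
    · have h2 : c s(φ v, φ u) = c s(v, u) := hpres v u h
      rwa [Sym2.eq_swap (a := φ v), Sym2.eq_swap (a := v)] at h2

theorem stmt4 {V : Type*} [Fintype V] (G : SimpleGraph V) {k : ℕ} (hk : 1 ≤ k)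
    (p : V → Fin k)
    (hind : ∀ u v, G.Adj u v → p u ≠ p v)
    (hfix : ∀ φ : Equiv.Perm V, IsGraphAut G φ → ∀ v, p (φ v) = p v) :
    ODminus G = (D' G + 1) / 2 := by
  classical
  -- canonical orientation always exists
  have Ocan : GraphOrientation G := by
    refine ⟨fun u v => G.Adj u v ∧ p u < p v, ?_, ?_⟩
    · intro u v
      constructor
      · intro h
        rcases lt_or_gt_of_ne (hind u v h) with hlt | hlt
        · exact Or.inl ⟨h, hlt⟩
        · exact Or.inr ⟨h.symm, hlt⟩
      · rintro (⟨h, -⟩ | ⟨h, -⟩); exacts [h, h.symm]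
    · rintro u v ⟨-, h1⟩ ⟨-, h2⟩; exact absurd h2 (asymm h1)
  set SE := {n | ∃ c : Sym2 V → Fin n, IsDistEdgeCol G c} with hSE
  by_cases hne : SE.Nonempty
  · -- D' G is attained
    obtain ⟨c, hc⟩ : D' G ∈ SE := Nat.sInf_mem hne
    -- upper bound: some orientation achieves ≤ (D' G + 1)/2
    obtain ⟨O₀, c', hc'⟩ := lemB p hind hfix c hc
    have h1 : Dd' O₀.A ≤ (D' G + 1) / 2 := Nat.sInf_le ⟨c', hc'⟩
    have hub : ODminus G ≤ (D' G + 1) / 2 :=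
      le_trans (Nat.sInf_le ⟨O₀, rfl⟩) h1
    -- lower bound
    have hmem : (ODminus G) ∈ {n | ∃ O : GraphOrientation G, Dd' O.A = n} :=
      Nat.sInf_mem ⟨Dd' O₀.A, O₀, rfl⟩
    obtain ⟨O, hO⟩ := hmem
    have hSO : {n | ∃ c' : V → V → Fin n, IsDistArcCol O.A c'}.Nonempty := by
      obtain ⟨c₀, hc₀⟩ := lemC O c hc
      exact ⟨D' G, c₀, hc₀⟩
    obtain ⟨cO, hcO⟩ : Dd' O.A ∈ {n | ∃ c' : V → V → Fin n, IsDistArcCol O.A c'} :=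
      Nat.sInf_mem hSO
    obtain ⟨cE, hcE⟩ := lemA p hind hfix O cO hcO
    have hD : D' G ≤ 2 * Dd' O.A := Nat.sInf_le ⟨cE, hcE⟩
    omega
  · -- no distinguishing edge colouring exists at all
    have hD0 : D' G = 0 := by
      rw [Set.not_nonempty_iff_eq_empty] at hne
      simp [D', ← hSE, hne]
    -- then no orientation has an arc colouring either
    have hDd : Dd' Ocan.A = 0 := by
      have : {n | ∃ c' : V → V → Fin n, IsDistArcCol Ocan.A c'} = ∅ := by
        rw [Set.eq_empty_iff_forall_notMem]
        rintro m ⟨c', hc'⟩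
        obtain ⟨c, hc⟩ := lemA p hind hfix Ocan c' hc'
        exact (Set.eq_empty_iff_forall_notMem.mp
          (Set.not_nonempty_iff_eq_empty.mp hne)) (2 * m) ⟨c, hc⟩
      simp [Dd', this]
    have : ODminus G = 0 :=
      Nat.eq_zero_of_le_zero (Nat.sInf_le ⟨Ocan, hDd⟩)
    rw [this, hD0]
end

section
/- Let G = (X ∪ Y, E) be a connected bipartite graph such that no automorphism of G interchanges the parts X and Y (i.e., every automorphism setwise fixes X and Y). Then OD'^-(G) = ⌈D'(G)/2⌉ and OD'^+(G) = D'(G). -/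
set_option linter.unusedSectionVars false

section Aux

variable {V : Type*} [Fintype V] {G : SimpleGraph V}

lemma graphAut_of_digraphAut (O : GraphOrientation G) {φ : Equiv.Perm V}
    (h : IsDigraphAut O.A φ) : IsGraphAut G φ := fun u v => by
  rw [O.consistent, O.consistent, h, h]

open Classical in
noncomputable def arcSym (O : GraphOrientation G) {C : Type*} (c : V → V → C) (d : V → Bool) :
    Sym2 V → C × Bool :=
  Sym2.lift ⟨fun u v =>
    if O.A u v then (c u v, d u)
    else if O.A v u then (c v u, d v)
    else if (Fintype.equivFin V) u ≤ (Fintype.equivFin V) v then (c u v, d u) else (c v u, d v),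
   by
    intro u v
    classical
    by_cases h1 : O.A u v
    · have h2 : ¬ O.A v u := O.asymm u v h1
      simp [h1, h2]
    by_cases h2 : O.A v u
    · simp [h1, h2]
    simp only [h1, h2, if_false]
    rcases lt_trichotomy ((Fintype.equivFin V) u) ((Fintype.equivFin V) v) with h | h | h
    · rw [if_pos h.le, if_neg (not_le.mpr h)]
    · have : u = v := (Fintype.equivFin V).injective h
      subst this; rfl
    · rw [if_neg (not_le.mpr h), if_pos h.le]⟩

lemma arcSym_of_A (O : GraphOrientation G) {C : Type*} (c : V → V → C) (d : V → Bool)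
    {u v : V} (h : O.A u v) : arcSym O c d s(u, v) = (c u v, d u) := by
  classical
  simp [arcSym, h]

/-- From a distinguishing edge colouring, get a distinguishing arc colouring (same colours)
for any orientation. -/
lemma distArc_of_distEdge (O : GraphOrientation G) {C : Type*} {c : Sym2 V → C}
    (hc : IsDistEdgeCol G c) : IsDistArcCol O.A (fun u v => c s(u, v)) := by
  intro φ hφ hpres
  refine hc φ (graphAut_of_digraphAut O hφ) ?_
  intro e he
  induction e with
  | _ u v =>
    have hadj : G.Adj u v := he
    rcases (O.consistent u v).mp hadj with h | h
    · have := hpres u v h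
      simpa using this
    · have := hpres v u h
      have h1 : s(φ v, φ u) = s(φ u, φ v) := Sym2.eq_swap
      have h2 : s(v, u) = s(u, v) := Sym2.eq_swap
      simp only [h1, h2] at this
      simpa using this

end Aux

section Aux2

variable {V : Type*} [Fintype V] {G : SimpleGraph V}

lemma distEdge_of_distArc (b : V → Bool) (hbip : ∀ u v, G.Adj u v → b u ≠ b v)
    (hfix : ∀ φ : Equiv.Perm V, IsGraphAut G φ → ∀ v, b (φ v) = b v)
    (O : GraphOrientation G) {C : Type*} {c : V → V → C}
    (hc : IsDistArcCol O.A c) : IsDistEdgeCol G (arcSym O c b) := by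
  intro φ hφ hpres
  have hb : ∀ v, b (φ v) = b v := hfix φ hφ
  have key : ∀ u v, O.A u v → O.A (φ u) (φ v) ∧ c (φ u) (φ v) = c u v := by
    intro u v h
    have hadj : G.Adj u v := (O.consistent u v).mpr (Or.inl h)
    have hmem := hpres s(u, v) hadj
    rw [Sym2.map_pair_eq, arcSym_of_A O c b h] at hmem
    have hadj' : G.Adj (φ u) (φ v) := (hφ u v).mpr hadj
    rcases (O.consistent _ _).mp hadj' with h' | h'
    · rw [arcSym_of_A O c b h'] at hmem
      exact ⟨h', (Prod.ext_iff.mp hmem).1⟩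
    · rw [show s(φ u, φ v) = s(φ v, φ u) from Sym2.eq_swap, arcSym_of_A O c b h'] at hmem
      have h2 : b (φ v) = b u := (Prod.ext_iff.mp hmem).2
      rw [hb v] at h2
      exact absurd h2.symm (hbip u v hadj)
  have haut : IsDigraphAut O.A φ := by
    intro u v
    constructor
    · intro h'
      have hadj : G.Adj u v := (hφ u v).mp ((O.consistent _ _).mpr (Or.inl h'))
      rcases (O.consistent u v).mp hadj with h | h
      · exact h
      · exact absurd (key v u h).1 (O.asymm _ _ h')
    · intro h; exact (key u v h).1
  exact hc φ haut (fun u v h => (key u v h).2)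

lemma exists_distEdge (hconn : G.Connected) (b : V → Bool)
    (hbip : ∀ u v, G.Adj u v → b u ≠ b v)
    (hfix : ∀ φ : Equiv.Perm V, IsGraphAut G φ → ∀ v, b (φ v) = b v) :
    {k | ∃ c : Sym2 V → Fin k, IsDistEdgeCol G c}.Nonempty := by
  classical
  refine ⟨Fintype.card (Sym2 V), Fintype.equivFin (Sym2 V), ?_⟩
  intro φ hφ hpres
  by_cases hV : Nontrivial V
  · ext u
    show φ u = u
    obtain ⟨v, hv⟩ := exists_ne u
    have hnb : ∃ w, G.Adj u w := by
      obtain ⟨w⟩ := hconn.preconnected u v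
      cases w with
      | nil => exact absurd rfl hv
      | cons h p => exact ⟨_, h⟩
    obtain ⟨w, hw⟩ := hnb
    have hmem := hpres s(u, w) hw
    have hfixe : Sym2.map φ s(u, w) = s(u, w) := (Fintype.equivFin (Sym2 V)).injective hmem
    rw [Sym2.map_pair_eq] at hfixe
    rcases Sym2.eq_iff.mp hfixe with ⟨h1, h2⟩ | ⟨h1, h2⟩
    · exact h1
    · exfalso
      have : b (φ u) = b u := hfix φ hφ u
      rw [h1] at this
      exact hbip u w hw this.symm
  · have : Subsingleton V := not_nontrivial_iff_subsingleton.mp hV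
    ext u
    exact Subsingleton.elim _ _

end Aux2

theorem stmt6 {V : Type*} [Fintype V] (G : SimpleGraph V) (hconn : G.Connected)
    (b : V → Bool) (hbip : ∀ u v, G.Adj u v → b u ≠ b v)
    (hfix : ∀ φ : Equiv.Perm V, IsGraphAut G φ → ∀ v, b (φ v) = b v) :
    ODminus G = (D' G + 1) / 2 ∧ ODplus G = D' G := by
  classical
  -- existence of a distinguishing edge colouring with `D' G` colours
  have hDset : {k | ∃ c : Sym2 V → Fin k, IsDistEdgeCol G c}.Nonempty :=
    exists_distEdge hconn b hbip hfix
  obtain ⟨c₀, hc₀⟩ : ∃ c : Sym2 V → Fin (D' G), IsDistEdgeCol G c := Nat.sInf_mem hDset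
  -- every orientation has distinguishing index at most D' G
  have hDd_le : ∀ O : GraphOrientation G, Dd' O.A ≤ D' G := fun O =>
    Nat.sInf_le ⟨fun u v => c₀ s(u, v), distArc_of_distEdge O hc₀⟩
  have hDdset : ∀ O : GraphOrientation G,
      {k | ∃ c : V → V → Fin k, IsDistArcCol O.A c}.Nonempty :=
    fun O => ⟨D' G, fun u v => c₀ s(u, v), distArc_of_distEdge O hc₀⟩
  -- lower bound: D' G ≤ 2 * Dd' O for every orientation O
  have hlow : ∀ O : GraphOrientation G, D' G ≤ 2 * Dd' O.A := by
    intro O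
    obtain ⟨c, hc⟩ := Nat.sInf_mem (hDdset O)
    have hdist := distEdge_of_distArc b hbip hfix O hc
    have hcard : Fintype.card (Fin (Dd' O.A) × Bool) = 2 * Dd' O.A := by
      simp [mul_comm]
    let e : (Fin (Dd' O.A) × Bool) ≃ Fin (2 * Dd' O.A) :=
      (Fintype.equivFin _).trans (finCongr hcard)
    have hdist2 : IsDistEdgeCol G (fun x => e (arcSym O c b x)) := by
      intro φ hφ hpres
      exact hdist φ hφ (fun e' he' => e.injective (hpres e' he'))
    exact Nat.sInf_le ⟨_, hdist2⟩
  -- the canonical orientation O₀ (all edges from the `true` side)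
  have hcons₀ : ∀ u v, G.Adj u v ↔ (G.Adj u v ∧ b u = true) ∨ (G.Adj v u ∧ b v = true) := by
    intro u v
    constructor
    · intro h
      have hne := hbip u v h
      cases hbu : b u with
      | true => exact Or.inl ⟨h, rfl⟩
      | false =>
        refine Or.inr ⟨h.symm, ?_⟩
        cases hbv : b v with
        | true => rfl
        | false => rw [hbu, hbv] at hne; exact absurd rfl hne
    · rintro (⟨h, _⟩ | ⟨h, _⟩)
      · exact h
      · exact h.symm
  have hasym₀ : ∀ u v, (G.Adj u v ∧ b u = true) → ¬(G.Adj v u ∧ b v = true) := by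
    rintro u v ⟨h, hu⟩ ⟨h', hv⟩
    exact hbip u v h (hu.trans hv.symm)
  let O₀ : GraphOrientation G := ⟨fun u v => G.Adj u v ∧ b u = true, hcons₀, hasym₀⟩
  have hO₀eq : Dd' O₀.A = D' G := by
    refine le_antisymm (hDd_le O₀) ?_
    obtain ⟨c, hc⟩ := Nat.sInf_mem (hDdset O₀)
    have hdist : IsDistEdgeCol G (fun x => (arcSym O₀ c b x).1) := by
      intro φ hφ hpres
      have hb := hfix φ hφ
      have haut : IsDigraphAut O₀.A φ := by
        intro u v
        show (G.Adj (φ u) (φ v) ∧ b (φ u) = true) ↔ (G.Adj u v ∧ b u = true)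
        rw [hφ u v, hb u]
      refine hc φ haut ?_
      intro u v h
      have h' : O₀.A (φ u) (φ v) := (haut u v).mpr h
      have hadj : G.Adj u v := h.1
      have hp := hpres s(u, v) hadj
      simp only [Sym2.map_pair_eq, arcSym_of_A O₀ c b h', arcSym_of_A O₀ c b h] at hp
      exact hp
    exact Nat.sInf_le ⟨_, hdist⟩
  -- ODplus
  have hplus : ODplus G = D' G := by
    refine IsGreatest.csSup_eq ⟨⟨O₀, hO₀eq⟩, ?_⟩
    rintro n ⟨O, rfl⟩
    exact hDd_le O
  -- orientation achieving ⌈D'/2⌉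
  have hkmem : ∃ O : GraphOrientation G, Dd' O.A ≤ (D' G + 1) / 2 := by
    set k := (D' G + 1) / 2 with hk
    have hle : D' G ≤ 2 * k := by omega
    obtain ⟨ι⟩ : Nonempty (Fin (D' G) ↪ (Fin k × Bool)) :=
      Function.Embedding.nonempty_of_card_le (by simpa [mul_comm] using hle)
    set c' : Sym2 V → Fin k × Bool := fun x => ι (c₀ x) with hc'def
    have hc'dist : IsDistEdgeCol G c' := fun φ hφ hpres =>
      hc₀ φ hφ (fun e he => ι.injective (hpres e he))
    have hcons : ∀ u v, G.Adj u v ↔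
        (G.Adj u v ∧ b u = (c' s(u, v)).2) ∨ (G.Adj v u ∧ b v = (c' s(v, u)).2) := by
      intro u v
      constructor
      · intro h
        have hne := hbip u v h
        by_cases hbu : b u = (c' s(u, v)).2
        · exact Or.inl ⟨h, hbu⟩
        · refine Or.inr ⟨h.symm, ?_⟩
          rw [show s(v, u) = s(u, v) from Sym2.eq_swap]
          revert hne hbu
          cases b u <;> cases b v <;> cases (c' s(u, v)).2 <;> simp
      · rintro (⟨h, _⟩ | ⟨h, _⟩)
        · exact h
        · exact h.symm
    have hasym : ∀ u v, (G.Adj u v ∧ b u = (c' s(u, v)).2) →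
        ¬(G.Adj v u ∧ b v = (c' s(v, u)).2) := by
      rintro u v ⟨h, hu⟩ ⟨h', hv⟩
      rw [show s(v, u) = s(u, v) from Sym2.eq_swap] at hv
      exact hbip u v h (hu.trans hv.symm)
    let O₁ : GraphOrientation G := ⟨fun u v => G.Adj u v ∧ b u = (c' s(u, v)).2, hcons, hasym⟩
    refine ⟨O₁, ?_⟩
    have harc : IsDistArcCol O₁.A (fun u v => (c' s(u, v)).1) := by
      intro φ hφ hpres
      have hgφ : IsGraphAut G φ := graphAut_of_digraphAut O₁ hφ
      refine hc'dist φ hgφ ?_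
      have hb := hfix φ hgφ
      have key : ∀ u v, O₁.A u v → c' s(φ u, φ v) = c' s(u, v) := by
        intro u v h
        have h' : O₁.A (φ u) (φ v) := (hφ u v).mpr h
        have h1 : (c' s(φ u, φ v)).1 = (c' s(u, v)).1 := hpres u v h
        have h2 : (c' s(φ u, φ v)).2 = (c' s(u, v)).2 := by
          rw [← h'.2, ← h.2, hb u]
        exact Prod.ext h1 h2
      intro e he
      induction e with
      | _ u v =>
        have hadj : G.Adj u v := he
        rw [Sym2.map_pair_eq]
        rcases (O₁.consistent u v).mp hadj with h | h
        · exact key u v h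
        · rw [show s(φ u, φ v) = s(φ v, φ u) from Sym2.eq_swap,
            show s(u, v) = s(v, u) from Sym2.eq_swap]
          exact key v u h
    exact Nat.sInf_le ⟨_, harc⟩
  -- ODminus
  have hminus : ODminus G = (D' G + 1) / 2 := by
    obtain ⟨O₁, hO₁⟩ := hkmem
    have hlow' : ∀ n ∈ {n | ∃ O : GraphOrientation G, Dd' O.A = n}, (D' G + 1) / 2 ≤ n := by
      rintro n ⟨O, rfl⟩
      have := hlow O
      omega
    have heq : Dd' O₁.A = (D' G + 1) / 2 := le_antisymm hO₁ (hlow' _ ⟨O₁, rfl⟩)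
    exact IsLeast.csInf_eq ⟨⟨O₁, heq⟩, hlow'⟩
  exact ⟨hminus, hplus⟩
end

section
/- Every traceable graph G admits a rigid orientation; in particular OD'^-(G) = 1. -/
/-!
Orient every edge from its earlier to its later endpoint along a Hamiltonian path. Then one
vertex reaches another exactly when it comes earlier on the path, so a digraph automorphism
induces an order automorphism of a finite chain, which is the identity.

For `OD'⁻(G) = 1` one also needs that no orientation has `Dd' O.A = sInf ∅ = 0`: as a
traceable graph is connected, every orientation has an arc at each vertex (unless there is only
one vertex), so any injective arc colouring is distinguishing.
-/

open Function Relation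

section

variable {V : Type*}

theorem Equiv.Perm.eq_one_of_strictMono {α : Type*} [LinearOrder α] [WellFoundedLT α]
    {σ : Equiv.Perm α} (hσ : StrictMono σ) : σ = 1 := by
  have h := Subsingleton.elim (hσ.orderIsoOfSurjective σ σ.surjective) (OrderIso.refl α)
  exact Equiv.ext fun x => DFunLike.congr_fun h x

theorem IsDigraphAut.transGen {A : V → V → Prop} {φ : Equiv.Perm V} (hφ : IsDigraphAut A φ)
    (u v : V) : TransGen A (φ u) (φ v) ↔ TransGen A u v := by
  refine ⟨fun h => ?_, fun h => TransGen.lift φ (fun a b hab => (hφ a b).2 hab) _ _ h⟩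
  simpa [Function.onFun] using
    TransGen.lift φ.symm (fun a b hab => (hφ _ _).1 (by simpa using hab)) _ _ h

namespace GraphOrientation

variable {G : SimpleGraph V} {α : Type*} [LinearOrder α]

def ofRank (G : SimpleGraph V) (f : V → α) (hf : Injective f) : GraphOrientation G where
  A u v := G.Adj u v ∧ f u < f v
  consistent u v := by
    refine ⟨fun h => ?_, by rintro (h | h) <;> [exact h.1; exact h.1.symm]⟩
    rcases lt_or_gt_of_ne (hf.ne h.ne) with hlt | hlt
    exacts [Or.inl ⟨h, hlt⟩, Or.inr ⟨h.symm, hlt⟩]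
  asymm _ _ h h' := lt_asymm h.2 h'.2

theorem lt_of_transGen_ofRank {f : V → α} {hf : Injective f} {u v : V}
    (h : TransGen (ofRank G f hf).A u v) : f u < f v := by
  induction h with
  | single h => exact h.2
  | tail _ hbc ih => exact ih.trans hbc.2

theorem transGen_ofRank_iff {n : ℕ} (f : V ≃ Fin n)
    (hf : ∀ u v, (f u : ℕ) + 1 = f v → G.Adj u v) (u v : V) :
    TransGen (ofRank G f f.injective).A u v ↔ f u < f v := by
  refine ⟨lt_of_transGen_ofRank, fun huv => ?_⟩
  suffices ∀ k u v, (f v : ℕ) = f u + k + 1 → TransGen (ofRank G f f.injective).A u v from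
    this (f v - f u - 1) u v (by rw [Fin.lt_def] at huv; omega)
  intro k
  induction k with
  | zero => exact fun u v h => .single ⟨hf u v h.symm, by rw [Fin.lt_def]; omega⟩
  | succ k ih =>
    intro u v h
    let w := f.symm ⟨f u + k + 1, by omega⟩
    have hw : (f w : ℕ) = f u + k + 1 := by simp [w]
    exact .tail (ih u w hw) ⟨hf w v (by omega), by rw [Fin.lt_def]; omega⟩

theorem eq_one_of_isDigraphAut_ofRank {n : ℕ} (f : V ≃ Fin n) (hf : ∀ u v, (f u : ℕ) + 1 = f v → G.Adj u v)
    (φ : Equiv.Perm V) (hφ : IsDigraphAut (ofRank G f f.injective).A φ) : φ = 1 := by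
  have hmono : StrictMono (f.permCongr φ) := fun i j hij => by
    have := (hφ.transGen (f.symm i) (f.symm j)).2 ((transGen_ofRank_iff f hf _ _).2 (by simpa))
    simpa using (transGen_ofRank_iff f hf _ _).1 this
  have hid := Equiv.Perm.eq_one_of_strictMono hmono
  exact Equiv.ext fun x => f.injective (by simpa using Equiv.ext_iff.1 hid (f x))

end GraphOrientation

theorem isDistArcCol_of_injective {A : V → V → Prop} {C : Type*} {c : V → V → C}
    (hc : Injective (uncurry c)) (hA : ∀ x y, x ≠ y → ∃ z, A x z ∨ A z x) :
    IsDistArcCol A c := by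
  intro φ _ hφc
  refine Equiv.ext fun x => by_contra fun hx => ?_
  obtain ⟨z, hz | hz⟩ := hA x (φ x) (Ne.symm hx)
  · exact hx (congrArg Prod.fst (@hc (φ x, φ z) (x, z) (hφc x z hz)))
  · exact hx (congrArg Prod.snd (@hc (φ z, φ x) (z, x) (hφc z x hz)))

theorem Dd'_ne_zero_of_exists [Nonempty V] {A : V → V → Prop}
    (h : ∃ k, ∃ c : V → V → Fin k, IsDistArcCol A c) : Dd' A ≠ 0 := by
  obtain ⟨x⟩ := ‹Nonempty V›
  rw [Dd', Ne, Nat.sInf_eq_zero, not_or]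
  exact ⟨fun ⟨c, _⟩ => (c x x).elim0, Set.nonempty_iff_ne_empty.1 h⟩

theorem Dd'_eq_one_of_rigid [Nonempty V] {A : V → V → Prop}
    (hA : ∀ φ : Equiv.Perm V, IsDigraphAut A φ → φ = 1) : Dd' A = 1 := by
  have h1 : ∃ c : V → V → Fin 1, IsDistArcCol A c := ⟨fun _ _ => 0, fun φ hφ _ => hA φ hφ⟩
  have := Dd'_ne_zero_of_exists ⟨1, h1⟩
  have : Dd' A ≤ 1 := Nat.sInf_le h1
  omega

theorem GraphOrientation.Dd'_ne_zero [Finite V] [Nonempty V] {G : SimpleGraph V}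
    (hG : G.Preconnected) (O : GraphOrientation G) : Dd' O.A ≠ 0 := by
  obtain ⟨n, ⟨e⟩⟩ := Finite.exists_equiv_fin (V × V)
  refine Dd'_ne_zero_of_exists ⟨n, curry e, isDistArcCol_of_injective (by simpa using e.injective)
    fun x y hxy => ?_⟩
  have : Nontrivial V := ⟨x, y, hxy⟩
  obtain ⟨z, hz⟩ := hG.exists_adj_of_nontrivial x
  exact ⟨z, (O.consistent x z).1 hz⟩

theorem ODminus_eq_one [Finite V] [Nonempty V] {G : SimpleGraph V} (hG : G.Preconnected)
    (O : GraphOrientation G) (hO : ∀ φ : Equiv.Perm V, IsDigraphAut O.A φ → φ = 1) :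
    ODminus G = 1 := by
  have h1 : 1 ∈ {n | ∃ O : GraphOrientation G, Dd' O.A = n} := ⟨O, Dd'_eq_one_of_rigid hO⟩
  have hle : ODminus G ≤ 1 := Nat.sInf_le h1
  have hne : ODminus G ≠ 0 := by
    rw [ODminus, Ne, Nat.sInf_eq_zero, not_or]
    exact ⟨fun ⟨O', hO'⟩ => O'.Dd'_ne_zero hG hO', Set.nonempty_iff_ne_empty.1 ⟨1, h1⟩⟩
  omega

namespace SimpleGraph.Walk.IsHamiltonian

variable [DecidableEq V] {G : SimpleGraph V} {u v : V} {p : G.Walk u v}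

theorem preconnected (hp : p.IsHamiltonian) : G.Preconnected := fun x y =>
  (p.takeUntil x (hp.mem_support x)).reachable.symm.trans
    (p.takeUntil y (hp.mem_support y)).reachable

theorem adj_of_succ_getVertEquiv_symm (hp : p.IsHamiltonian) (x y : V)
    (h : (hp.getVertEquiv.symm x : ℕ) + 1 = hp.getVertEquiv.symm y) : G.Adj x y := by
  have hy : (hp.getVertEquiv.symm y : ℕ) < p.length + 1 :=
    p.length_support ▸ (hp.getVertEquiv.symm y).isLt
  have hadj := p.adj_getVert_succ (i := hp.getVertEquiv.symm x) (by omega)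
  have hvert (z : V) : p.getVert (hp.getVertEquiv.symm z) = z := hp.getVertEquiv.apply_symm_apply z
  rwa [h, hvert, hvert] at hadj

end SimpleGraph.Walk.IsHamiltonian

end

theorem stmt7_general {V : Type*} [DecidableEq V] (G : SimpleGraph V)
    (h : Traceable G) :
    (∃ O : GraphOrientation G, ∀ φ : Equiv.Perm V, IsDigraphAut O.A φ → φ = 1) ∧
      ODminus G = 1 := by
  obtain ⟨u, v, p, hp⟩ := h
  have : Nonempty V := ⟨u⟩
  have := hp.finite
  let f := hp.getVertEquiv.symm
  let O := GraphOrientation.ofRank G f f.injective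
  have hO := GraphOrientation.eq_one_of_isDigraphAut_ofRank f hp.adj_of_succ_getVertEquiv_symm
  exact ⟨⟨O, hO⟩, ODminus_eq_one hp.preconnected O hO⟩

theorem stmt7 {V : Type*} [Fintype V] [DecidableEq V] (G : SimpleGraph V)
    (h : Traceable G) :
    (∃ O : GraphOrientation G, ∀ φ : Equiv.Perm V, IsDigraphAut O.A φ → φ = 1) ∧
      ODminus G = 1 :=
  stmt7_general G h
end

section
/- Orient the edges of a graph G along a Hamiltonian path v₁,…,v_n by directing each edge from the vertex with smaller index to the vertex with larger index. In the resulting orientation, for each vertex the number of vertices reachable by a directed path is distinct, and hence the orientation has no non-trivial automorphism. -/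
/-! Arcs only go forward along the path and consecutive path vertices are joined by arcs, so
`e j` is reachable from `e i` exactly when `i ≤ j`. Hence `e i` reaches `n - i` vertices; these
counts are pairwise distinct, and a digraph automorphism preserves them, so it fixes every
vertex. -/

open Relation

theorem reflTransGen_iff_le_of_covBy {α V : Type*} [PartialOrder α] [LocallyFiniteOrder α]
    {r : V → V → Prop} (e : α ≃ V) (hle : ∀ x y, r x y → e.symm x ≤ e.symm y)
    (hcovBy : ∀ a b, a ⋖ b → r (e a) (e b)) {x y : V} :
    ReflTransGen r x y ↔ e.symm x ≤ e.symm y := by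
  refine ⟨fun h ↦ ?_, fun h ↦ ?_⟩
  · simpa [reflTransGen_eq_self] using h.lift e.symm hle
  · simpa [Function.onFun] using (le_iff_reflTransGen_covBy.mp h).lift e hcovBy

theorem Fin.ncard_setOf_le_equiv_symm {V : Type*} {n : ℕ} (e : Fin n ≃ V) (i : Fin n) :
    {z | i ≤ e.symm z}.ncard = n - i := by
  change (e.symm ⁻¹' Set.Ici i).ncard = _
  rw [← e.image_eq_preimage_symm, Set.ncard_image_of_injective _ e.injective, ← Finset.coe_Ici,
    Set.ncard_coe_finset, Fin.card_Ici]

theorem IsDigraphAut.reflTransGen_apply_iff {V : Type*} {r : V → V → Prop} {φ : Equiv.Perm V}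
    (hφ : IsDigraphAut r φ) {x y : V} : ReflTransGen r (φ x) (φ y) ↔ ReflTransGen r x y :=
  ⟨fun h ↦ by
    simpa [Function.onFun] using
      h.lift (p := r) φ.symm fun a b hab ↦ (hφ _ _).1 (by simpa using hab),
    fun h ↦ h.lift φ fun a b ↦ (hφ a b).2⟩

theorem IsDigraphAut.ncard_reach_apply {V : Type*} {r : V → V → Prop} {φ : Equiv.Perm V}
    (hφ : IsDigraphAut r φ) (x : V) :
    {z | ReflTransGen r (φ x) z}.ncard = {z | ReflTransGen r x z}.ncard := by
  have : {z | ReflTransGen r (φ x) z} = φ '' {z | ReflTransGen r x z} := Set.ext fun z ↦ by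
    simpa [φ.image_eq_preimage_symm] using hφ.reflTransGen_apply_iff (x := x) (y := φ.symm z)
  rw [this, Set.ncard_image_of_injective _ φ.injective]

theorem IsDigraphAut.eq_one_of_injective_ncard_reach {V : Type*} {r : V → V → Prop}
    {φ : Equiv.Perm V} (hφ : IsDigraphAut r φ)
    (hinj : Function.Injective fun x ↦ {z | ReflTransGen r x z}.ncard) : φ = 1 :=
  Equiv.ext fun x ↦ hinj (hφ.ncard_reach_apply x)

theorem stmt8_general {V : Type*} (G : SimpleGraph V) {n : ℕ} (e : Fin n ≃ V)
    (hpath : ∀ i j : Fin n, (j : ℕ) = (i : ℕ) + 1 → G.Adj (e i) (e j))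
    (O : GraphOrientation G)
    (hO : ∀ x y, O.A x y ↔ G.Adj x y ∧ e.symm x < e.symm y) :
    (Function.Injective fun x : V => {z | Relation.ReflTransGen O.A x z}.ncard) ∧
      ∀ φ : Equiv.Perm V, IsDigraphAut O.A φ → φ = 1 := by
  have hreach (x : V) : {z | ReflTransGen O.A x z}.ncard = n - e.symm x := by
    have hcovBy (i j : Fin n) (hij : i ⋖ j) : O.A (e i) (e j) := by
      rw [Fin.covBy_iff, Nat.covBy_iff_add_one_eq] at hij
      exact (hO _ _).2 ⟨hpath i j hij.symm, by simpa using hij.le⟩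
    simp_rw [reflTransGen_iff_le_of_covBy e (fun x y h ↦ ((hO x y).1 h).2.le) hcovBy]
    exact Fin.ncard_setOf_le_equiv_symm e _
  have hinj : Function.Injective fun x ↦ {z | ReflTransGen O.A x z}.ncard := fun x y h ↦ by
    simp only [hreach] at h
    exact e.symm.injective (Fin.ext (by omega))
  exact ⟨hinj, fun φ hφ ↦ hφ.eq_one_of_injective_ncard_reach hinj⟩

theorem stmt8 {V : Type*} [Fintype V] (G : SimpleGraph V) {n : ℕ} (e : Fin n ≃ V)
    (hpath : ∀ i j : Fin n, (j : ℕ) = (i : ℕ) + 1 → G.Adj (e i) (e j))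
    (O : GraphOrientation G)
    (hO : ∀ x y, O.A x y ↔ G.Adj x y ∧ e.symm x < e.symm y) :
    (Function.Injective fun x : V => {z | Relation.ReflTransGen O.A x z}.ncard) ∧
      ∀ φ : Equiv.Perm V, IsDigraphAut O.A φ → φ = 1 :=
  stmt8_general G e hpath O hO
end

section
/- Let G be a graph with D'(G) = 2 in which every non-trivial automorphism is twisted (some power of it swaps the ends of an edge). Then every orientation of G is rigid, so OD'^-(G) = OD'^+(G) = 1. -/
lemma digraphAut_pow {V : Type*} {A : V → V → Prop} {φ : Equiv.Perm V}
    (hφ : ∀ u v, A (φ u) (φ v) ↔ A u v) (n : ℕ) :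
    ∀ u v, A ((φ ^ n) u) ((φ ^ n) v) ↔ A u v := by
  induction n with
  | zero => simp
  | succ n ih =>
    intro u v
    rw [pow_succ φ n]
    simp only [Equiv.Perm.mul_apply]
    rw [ih, hφ]

theorem stmt10 {V : Type*} [Fintype V] (G : SimpleGraph V) (hD : D' G = 2)
    (h : ∀ φ : Equiv.Perm V, IsGraphAut G φ → φ ≠ 1 → Twisted G φ) :
    (∀ O : GraphOrientation G, ∀ φ : Equiv.Perm V, IsDigraphAut O.A φ → φ = 1) ∧
      ODminus G = 1 ∧ ODplus G = 1 := by
  -- V is nonempty, since otherwise D' G = 0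
  have hV : Nonempty V := by
    by_contra hV
    have hVe : IsEmpty V := not_nonempty_iff.mp hV
    have h0 : (0 : ℕ) ∈ {k | ∃ c : Sym2 V → Fin k, IsDistEdgeCol G c} := by
      haveI : IsEmpty (Sym2 V) := ⟨fun e => Sym2.ind (fun a _ => isEmptyElim a) e⟩
      refine ⟨fun e => isEmptyElim e, ?_⟩
      intro φ _ _
      exact Equiv.ext fun x => isEmptyElim x
    have : D' G = 0 := Nat.sInf_eq_zero.mpr (Or.inl h0)
    rw [this] at hD
    exact absurd hD (by norm_num)
  -- rigidity of every orientation
  have rigid : ∀ O : GraphOrientation G, ∀ φ : Equiv.Perm V, IsDigraphAut O.A φ → φ = 1 := by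
    intro O φ hφ
    by_contra hne
    have hGA : IsGraphAut G φ := by
      intro u v
      rw [O.consistent, O.consistent, hφ, hφ]
    obtain ⟨n, u, v, hn, hadj, huv, hvu⟩ := h φ hGA hne
    have hpow := digraphAut_pow hφ n
    rcases (O.consistent u v).mp hadj with hA | hA
    · have : O.A v u := by
        have := (hpow u v).mpr hA
        rwa [huv, hvu] at this
      exact O.asymm u v hA this
    · have : O.A u v := by
        have := (hpow v u).mpr hA
        rwa [huv, hvu] at this
      exact O.asymm v u hA this
  refine ⟨rigid, ?_⟩
  -- every orientation has Dd' = 1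
  · -- construct an orientation from a well-ordering
    have hD1 : ∀ O : GraphOrientation G, Dd' O.A = 1 := by
      intro O
      have h1 : (1 : ℕ) ∈ {k | ∃ c : V → V → Fin k, IsDistArcCol O.A c} :=
        ⟨fun _ _ => 0, fun φ hφ _ => rigid O φ hφ⟩
      have h0 : (0 : ℕ) ∉ {k | ∃ c : V → V → Fin k, IsDistArcCol O.A c} := by
        rintro ⟨c, -⟩
        obtain ⟨v⟩ := hV
        exact (c v v).elim0
      refine le_antisymm (Nat.sInf_le h1) ?_
      rcases Nat.eq_zero_or_pos (Dd' O.A) with hz | hp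
      · exact absurd ((Nat.sInf_eq_zero.mp hz).resolve_right
          (Set.nonempty_iff_ne_empty.mp ⟨1, h1⟩)) h0
      · exact hp
    have hOr : ∃ O : GraphOrientation G, Dd' O.A = 1 := by
      have hwo : IsWellOrder V WellOrderingRel := inferInstance
      refine ⟨⟨fun u v => G.Adj u v ∧ WellOrderingRel u v, ?_, ?_⟩, ?_⟩
      · intro u v
        constructor
        · intro hadj
          rcases trichotomous_of WellOrderingRel u v with hr | he | hr
          · exact Or.inl ⟨hadj, hr⟩
          · exact absurd he hadj.ne
          · exact Or.inr ⟨hadj.symm, hr⟩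
        · rintro (⟨hadj, -⟩ | ⟨hadj, -⟩)
          · exact hadj
          · exact hadj.symm
      · rintro u v ⟨-, hr⟩ ⟨-, hr'⟩
        exact asymm hr hr'
      · exact hD1 _
    have hset : {n | ∃ O : GraphOrientation G, Dd' O.A = n} = {1} := by
      ext n
      simp only [Set.mem_setOf_eq, Set.mem_singleton_iff]
      constructor
      · rintro ⟨O, rfl⟩; exact hD1 O
      · rintro rfl; exact hOr
    constructor
    · rw [ODminus, hset]; simp
    · rw [ODplus, hset]; simp
end

section
/- Let G be a graph and φ a non-trivial non-twisted automorphism of G (no power of φ interchanges the two end-vertices of any edge). Then there exists an orientation G⃗ of G such that φ is an automorphism of G⃗; in particular if D'(G) = 2 then OD'^+(G) = 2. -/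
private def pairSetoid {V : Type*} (φ : Equiv.Perm V) : Setoid (V × V) where
  r p q := ∃ n : ℤ, (φ ^ n) p.1 = q.1 ∧ (φ ^ n) p.2 = q.2
  iseqv := by
    constructor
    · intro p; exact ⟨0, by simp, by simp⟩
    · rintro p q ⟨n, h1, h2⟩
      refine ⟨-n, ?_, ?_⟩ <;> simp [zpow_neg, ← h1, ← h2]
    · rintro p q r ⟨n, h1, h2⟩ ⟨m, h3, h4⟩
      refine ⟨m + n, ?_, ?_⟩ <;>
        simp [zpow_add, Equiv.Perm.mul_apply, h1, h2, h3, h4]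

theorem stmt11 {V : Type*} [Fintype V] (G : SimpleGraph V) (φ : Equiv.Perm V)
    (hφ : IsGraphAut G φ) (hne : φ ≠ 1) (hnt : ¬ Twisted G φ) :
    (∃ O : GraphOrientation G, IsDigraphAut O.A φ) ∧ (D' G = 2 → ODplus G = 2) := by
  classical
  have hV : Nonempty V := by
    by_contra h
    rw [not_nonempty_iff] at h
    exact hne (Equiv.ext fun x => (h.false x).elim)
  letI : LinearOrder (Quotient (pairSetoid φ)) := IsWellOrder.linearOrder WellOrderingRel
  let q : V × V → Quotient (pairSetoid φ) := Quotient.mk _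
  have hqφ : ∀ u v : V, q (φ u, φ v) = q (u, v) :=
    fun u v => Quotient.sound ⟨-1, by simp, by simp⟩
  have hqne : ∀ u v : V, G.Adj u v → q (u, v) ≠ q (v, u) := by
    intro u v hA h
    obtain ⟨n, h1, h2⟩ := Quotient.exact h
    simp only at h1 h2
    have key : ∀ m : ℤ, 0 < m → (φ ^ m) u = v → (φ ^ m) v = u → False := by
      intro m hm hmu hmv
      apply hnt
      refine ⟨m.toNat, u, v, by omega, hA, ?_, ?_⟩ <;>
        · rw [← zpow_natCast, Int.toNat_of_nonneg hm.le]
          assumption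
    rcases lt_trichotomy n 0 with hn | rfl | hn
    · have h1' : (φ ^ (-n)) v = u := by rw [zpow_neg, ← h1]; simp
      have h2' : (φ ^ (-n)) u = v := by rw [zpow_neg, ← h2]; simp
      exact key (-n) (by omega) h2' h1'
    · simp at h1; exact hA.ne h1
    · exact key n hn h1 h2
  let O : GraphOrientation G :=
    { A := fun u v => G.Adj u v ∧ q (u, v) < q (v, u)
      consistent := by
        intro u v
        constructor
        · intro h
          rcases lt_or_gt_of_ne (hqne u v h) with hlt | hlt
          · exact Or.inl ⟨h, hlt⟩
          · exact Or.inr ⟨h.symm, hlt⟩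
        · rintro (⟨h, -⟩ | ⟨h, -⟩)
          exacts [h, h.symm]
      asymm := by
        rintro u v ⟨-, h⟩ ⟨-, h'⟩
        exact absurd h' h.asymm }
  have hOaut : IsDigraphAut O.A φ := by
    intro u v
    show (G.Adj (φ u) (φ v) ∧ q (φ u, φ v) < q (φ v, φ u)) ↔ _
    rw [hφ, hqφ, hqφ]
  refine ⟨⟨O, hOaut⟩, ?_⟩
  intro hD
  have hS : ({k | ∃ c : Sym2 V → Fin k, IsDistEdgeCol G c} : Set ℕ).Nonempty := by
    by_contra h
    rw [Set.not_nonempty_iff_eq_empty] at h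
    rw [D', h, Nat.sInf_empty] at hD
    exact absurd hD (by norm_num)
  have h2S : ∃ c : Sym2 V → Fin 2, IsDistEdgeCol G c := by
    have h := Nat.sInf_mem hS
    rw [show sInf {k | ∃ c : Sym2 V → Fin k, IsDistEdgeCol G c} = D' G from rfl, hD] at h
    exact h
  obtain ⟨c, hc⟩ := h2S
  have hmem : ∀ O' : GraphOrientation G,
      2 ∈ {k | ∃ c' : V → V → Fin k, IsDistArcCol O'.A c'} := by
    intro O'
    refine ⟨fun u v => c s(u, v), ?_⟩
    intro ψ hψ hpres
    apply hc ψ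
    · intro u v
      rw [O'.consistent, O'.consistent, hψ, hψ]
    · intro e he
      induction e using Sym2.ind with
      | _ u v =>
        rw [SimpleGraph.mem_edgeSet] at he
        rcases (O'.consistent u v).mp he with h | h
        · rw [Sym2.map_pair_eq]
          exact hpres u v h
        · have h' := hpres v u h
          rw [Sym2.map_pair_eq,
            show s(ψ u, ψ v) = s(ψ v, ψ u) from Sym2.eq_swap,
            show s(u, v) = s(v, u) from Sym2.eq_swap]
          exact h'
  have hbound : ∀ O' : GraphOrientation G, Dd' O'.A ≤ 2 :=
    fun O' => Nat.sInf_le (hmem O')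
  have hO2 : Dd' O.A = 2 := by
    refine le_antisymm (hbound O) (le_csInf ⟨2, hmem O⟩ ?_)
    rintro k ⟨c', hc'⟩
    match k with
    | 0 => exact (c' hV.some hV.some).elim0
    | 1 => exact absurd (hc' φ hOaut fun u v _ => Subsingleton.elim _ _) hne
    | (k + 2) => omega
  have hTb : ∀ n ∈ {n | ∃ O' : GraphOrientation G, Dd' O'.A = n}, n ≤ 2 := by
    rintro n ⟨O', rfl⟩
    exact hbound O'
  have h2T : 2 ∈ {n | ∃ O' : GraphOrientation G, Dd' O'.A = n} := ⟨O, hO2⟩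
  exact le_antisymm (csSup_le ⟨2, h2T⟩ hTb) (le_csSup ⟨2, hTb⟩ h2T)
end

section
/- Let G⃗ be an orientation of a graph G obtained so that every edge crosses between parts of a setwise-fixed independent partition (so Aut(G⃗) = Aut(G)), and let c = (c₁, c₂) be an edge colouring of G with colour set {0,1} × {1,…,r}, where c₁ determines the orientation (direct uv from u to v iff c₁(uv)=0, for u in the smaller-indexed part). Then c is a distinguishing colouring of G if and only if c₂ is a distinguishing arc colouring of the orientation determined by c₁. -/
theorem stmt17 {V : Type*} (G : SimpleGraph V) {k : ℕ} (hk : 1 ≤ k)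
    (p : V → Fin k)
    (hind : ∀ u v, G.Adj u v → p u ≠ p v)
    (hfix : ∀ φ : Equiv.Perm V, IsGraphAut G φ → ∀ v, p (φ v) = p v)
    {r : ℕ} (c₁ : Sym2 V → Fin 2) (c₂ : Sym2 V → Fin r)
    (O : GraphOrientation G)
    (hO : ∀ u v, O.A u v ↔ G.Adj u v ∧
      ((p u < p v ∧ c₁ s(u, v) = 0) ∨ (p v < p u ∧ c₁ s(u, v) ≠ 0))) :
    IsDistEdgeCol G (fun e => (c₁ e, c₂ e)) ↔
      IsDistArcCol O.A (fun u v => c₂ s(u, v)) := by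
  constructor
  · intro hdist φ hφA hφc
    have hAut : IsGraphAut G φ := by
      intro u v
      rw [O.consistent, O.consistent, hφA, hφA]
    apply hdist φ hAut
    have key : ∀ u v, G.Adj u v → p u < p v →
        c₁ s(φ u, φ v) = c₁ s(u, v) ∧ c₂ s(φ u, φ v) = c₂ s(u, v) := by
      intro u v hadj hlt
      have hpu : p (φ u) = p u := hfix φ hAut u
      have hpv : p (φ v) = p v := hfix φ hAut v
      have hlt' : p (φ u) < p (φ v) := by rw [hpu, hpv]; exact hlt
      by_cases h0 : c₁ s(u, v) = 0
      · have hA : O.A u v := (hO u v).mpr ⟨hadj, Or.inl ⟨hlt, h0⟩⟩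
        have hA' : O.A (φ u) (φ v) := (hφA u v).mpr hA
        have := (hO (φ u) (φ v)).mp hA'
        rcases this.2 with ⟨_, hc⟩ | ⟨hgt, _⟩
        · exact ⟨hc.trans h0.symm, hφc u v hA⟩
        · exact absurd hgt (not_lt_of_gt hlt')
      · have hsw : s(v, u) = s(u, v) := Sym2.eq_swap
        have hA : O.A v u := (hO v u).mpr ⟨hadj.symm, Or.inr ⟨hlt, by rw [hsw]; exact h0⟩⟩
        have hA' : O.A (φ v) (φ u) := (hφA v u).mpr hA
        have := (hO (φ v) (φ u)).mp hA'
        have hsw' : s(φ v, φ u) = s(φ u, φ v) := Sym2.eq_swap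
        rcases this.2 with ⟨hgt, _⟩ | ⟨_, hc⟩
        · exact absurd hgt (not_lt_of_gt hlt')
        · rw [hsw'] at hc
          have h1 : ∀ a b : Fin 2, a ≠ 0 → b ≠ 0 → a = b := by decide
          have hc2 : c₂ s(φ u, φ v) = c₂ s(u, v) := by
            have := hφc v u hA
            simp only at this
            rwa [hsw', hsw] at this
          exact ⟨h1 _ _ hc h0, hc2⟩
    intro e he
    induction e using Sym2.inductionOn with
    | hf u v =>
      have hadj : G.Adj u v := he
      have hmap : Sym2.map φ s(u, v) = s(φ u, φ v) := rfl
      simp only [hmap, Prod.mk.injEq]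
      rcases lt_or_gt_of_ne (hind u v hadj) with hlt | hgt
      · exact key u v hadj hlt
      · have := key v u hadj.symm hgt
        rwa [show s(v, u) = s(u, v) from Sym2.eq_swap, show s(φ v, φ u) = s(φ u, φ v) from Sym2.eq_swap] at this
  · intro hdist φ hφA hφc
    have hc₁ : ∀ u v, G.Adj u v → c₁ s(φ u, φ v) = c₁ s(u, v) ∧
        c₂ s(φ u, φ v) = c₂ s(u, v) := by
      intro u v hadj
      have := hφc s(u, v) hadj
      have hmap : Sym2.map φ s(u, v) = s(φ u, φ v) := rfl
      simp only [hmap, Prod.mk.injEq] at this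
      exact this
    apply hdist φ
    · intro u v
      by_cases hadj : G.Adj u v
      · have hadj' : G.Adj (φ u) (φ v) := (hφA u v).mpr hadj
        rw [hO, hO, hfix φ hφA u, hfix φ hφA v, (hc₁ u v hadj).1]
        simp [hadj, hadj']
      · have hadj' : ¬ G.Adj (φ u) (φ v) := fun h => hadj ((hφA u v).mp h)
        rw [hO, hO]
        simp [hadj, hadj']
    · intro u v hA
      have hadj : G.Adj u v := (O.consistent u v).mpr (Or.inl hA)
      exact (hc₁ u v hadj).2
end
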